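/- arXiv:2501.02047 — 6 statements merged into one kernel-verified Lean document; each statement's English description precedes it below -/
import Mathlib

section
/- For every natural number n, the function T ↦ Σ_{k=0}^n (C(n,k) T^k (1-T)^{n-k})^2 is convex on all of ℝ. -/
open Finset Complex

-- sums of convex functions are convex
private lemma convexOn_finset_sum {ι : Type*} (t : Finset ι) (g : ι → ℝ → ℝ)
    (h : ∀ i ∈ t, ConvexOn ℝ Set.univ (g i)) :
    ConvexOn ℝ Set.univ (fun x => ∑ i ∈ t, g i x) := by
  classical
  induction t using Finset.induction_on with
  | empty => simpa using convexOn_const (0:ℝ) convex_univ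
  | insert _ _ hi ih =>
      simp only [Finset.sum_insert hi]
      exact (h _ (Finset.mem_insert_self _ _)).add
        (ih fun j hj => h j (Finset.mem_insert_of_mem hj))

private lemma quad_convex (c : ℝ) (hc : 0 ≤ c) :
    ConvexOn ℝ Set.univ (fun T : ℝ => 2*c*T^2 - 2*c*T + 1) := by
  refine ⟨convex_univ, fun x _ y _ a b ha hb hab => ?_⟩
  simp only [smul_eq_mul]
  obtain rfl : b = 1 - a := by linarith
  nlinarith [mul_nonneg (mul_nonneg (mul_nonneg ha hb) hc) (sq_nonneg (x - y))]

private lemma quad_nonneg (c : ℝ) (hc : 0 ≤ c) (hc2 : c ≤ 2) (T : ℝ) :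
    0 ≤ 2*c*T^2 - 2*c*T + 1 := by nlinarith [sq_nonneg (2*T-1)]

private lemma ortho {N : ℕ} (hN : 0 < N) {ζ : ℂ} (hζ : IsPrimitiveRoot ζ N)
    {k l : ℕ} (hk : k < N) (hl : l < N) :
    ∑ j ∈ range N, (ζ ^ k * (ζ ^ l)⁻¹) ^ j = if k = l then (N : ℂ) else 0 := by
  have hζ0 : ζ ≠ 0 := hζ.ne_zero hN.ne'
  by_cases hkl : k = l
  · subst hkl
    simp [mul_inv_cancel₀ (pow_ne_zero _ hζ0)]
  · rw [if_neg hkl]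
    have hξN : (ζ ^ k * (ζ ^ l)⁻¹) ^ N = 1 := by
      rw [mul_pow, inv_pow, ← pow_mul, ← pow_mul, mul_comm k N, mul_comm l N,
        pow_mul, pow_mul, hζ.pow_eq_one, one_pow, one_pow, inv_one, mul_one]
    have hξ1 : (ζ ^ k * (ζ ^ l)⁻¹) ≠ 1 := by
      intro h
      have h2 : ζ ^ k = ζ ^ l := by
        field_simp at h
        exact h
      exact hkl (hζ.pow_inj hk hl h2)
    rw [geom_sum_eq hξ1, hξN, sub_self, zero_div]

private lemma parseval {N : ℕ} (hN : 0 < N) {ζ : ℂ} (hζ : IsPrimitiveRoot ζ N) (a : ℕ → ℝ) :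
    ∑ j ∈ range N, ((∑ k ∈ range N, (a k : ℂ) * (ζ ^ j) ^ k) *
      (starRingEnd ℂ) (∑ k ∈ range N, (a k : ℂ) * (ζ ^ j) ^ k))
    = (N : ℂ) * ∑ k ∈ range N, (a k : ℂ) ^ 2 := by
  have hζ0 : ζ ≠ 0 := hζ.ne_zero hN.ne'
  have habs : ‖ζ‖ = 1 := hζ.norm'_eq_one hN.ne'
  have hconj : (starRingEnd ℂ) ζ = ζ⁻¹ := (Complex.inv_eq_conj habs).symm
  calc ∑ j ∈ range N, ((∑ k ∈ range N, (a k : ℂ) * (ζ ^ j) ^ k) *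
      (starRingEnd ℂ) (∑ k ∈ range N, (a k : ℂ) * (ζ ^ j) ^ k))
      = ∑ j ∈ range N, ∑ k ∈ range N, ∑ l ∈ range N,
          ((a k : ℂ) * (a l : ℂ)) * ((ζ ^ k * (ζ ^ l)⁻¹) ^ j) := by
        refine Finset.sum_congr rfl fun j _ => ?_
        rw [map_sum, Finset.sum_mul_sum]
        refine Finset.sum_congr rfl fun k _ => Finset.sum_congr rfl fun l _ => ?_
        rw [map_mul, map_pow, map_pow, Complex.conj_ofReal, hconj]
        rw [mul_pow, mul_mul_mul_comm]
        congr 1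
        rw [← pow_mul, ← pow_mul, inv_pow, ← pow_mul, inv_pow, ← pow_mul, mul_comm j k, mul_comm j l]
    _ = ∑ k ∈ range N, ∑ l ∈ range N,
          ((a k : ℂ) * (a l : ℂ)) * ∑ j ∈ range N, (ζ ^ k * (ζ ^ l)⁻¹) ^ j := by
        rw [Finset.sum_comm]
        refine Finset.sum_congr rfl fun k _ => ?_
        rw [Finset.sum_comm]
        refine Finset.sum_congr rfl fun l _ => ?_
        rw [Finset.mul_sum]
    _ = (N : ℂ) * ∑ k ∈ range N, (a k : ℂ) ^ 2 := by
        rw [Finset.mul_sum]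
        refine Finset.sum_congr rfl fun k hk => ?_
        rw [Finset.sum_eq_single k]
        · rw [ortho hN hζ (mem_range.mp hk) (mem_range.mp hk), if_pos rfl]
          ring
        · intro l hl hlk
          rw [ortho hN hζ (mem_range.mp hk) (mem_range.mp hl), if_neg (Ne.symm hlk), mul_zero]
        · intro h; exact absurd hk h

private lemma key (n : ℕ) (T : ℝ) :
    ((n : ℝ) + 1) * ∑ k ∈ range (n+1), ((n.choose k : ℝ) * T ^ k * (1 - T) ^ (n - k)) ^ 2
    = ∑ j ∈ range (n+1),
        (2*(1 - (Complex.exp (2 * Real.pi * Complex.I / ((n : ℂ)+1)) ^ j).re)*T^2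
          - 2*(1 - (Complex.exp (2 * Real.pi * Complex.I / ((n : ℂ)+1)) ^ j).re)*T + 1) ^ n := by
  set ζ : ℂ := Complex.exp (2 * Real.pi * Complex.I / ((n : ℂ)+1)) with hζdef
  have hζ : IsPrimitiveRoot ζ (n+1) := by
    have h := Complex.isPrimitiveRoot_exp (n+1) (Nat.succ_ne_zero n)
    rw [hζdef]
    convert h using 3
    push_cast
    ring
  have hN : 0 < n + 1 := Nat.succ_pos n
  have h1 : ∀ j : ℕ, (ζ ^ j).re * (ζ ^ j).re + (ζ ^ j).im * (ζ ^ j).im = 1 := by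
    intro j
    have habs : ‖ζ‖ = 1 := by
      exact hζ.norm'_eq_one hN.ne'
    have h2 : Complex.normSq (ζ ^ j) = 1 := by
      rw [← Complex.sq_norm, norm_pow, habs, one_pow, one_pow]
    rw [← Complex.normSq_apply, h2]
  have hP : ∀ j : ℕ, (∑ k ∈ range (n+1),
      (((n.choose k : ℝ) * T ^ k * (1 - T) ^ (n - k) : ℝ) : ℂ) * (ζ ^ j) ^ k)
      = ((T : ℂ) * ζ ^ j + (1 - (T : ℂ))) ^ n := by
    intro j
    rw [add_pow]
    refine Finset.sum_congr rfl fun k hk => ?_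
    push_cast
    ring
  have hQ : ∀ j : ℕ, ((T : ℂ) * ζ ^ j + (1 - (T : ℂ))) ^ n *
      (starRingEnd ℂ) (((T : ℂ) * ζ ^ j + (1 - (T : ℂ))) ^ n)
      = (((2*(1 - (ζ ^ j).re)*T^2 - 2*(1 - (ζ ^ j).re)*T + 1 : ℝ)) : ℂ) ^ n := by
    intro j
    rw [map_pow, ← mul_pow, Complex.mul_conj]
    congr 1
    have hre : ((T : ℂ) * ζ ^ j + (1 - (T : ℂ))).re = T * (ζ ^ j).re + (1 - T) := by simp
    have him : ((T : ℂ) * ζ ^ j + (1 - (T : ℂ))).im = T * (ζ ^ j).im := by simp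
    rw [show (Complex.normSq ((T : ℂ) * ζ ^ j + (1 - (T : ℂ))) : ℂ)
        = ((Complex.normSq ((T : ℂ) * ζ ^ j + (1 - (T : ℂ))) : ℝ) : ℂ) from rfl]
    rw [Complex.ofReal_inj.mpr ?_]
    rw [Complex.normSq_apply, hre, him]
    linear_combination (T^2 : ℝ) * h1 j
  have hp := parseval hN hζ (fun k => (n.choose k : ℝ) * T ^ k * (1 - T) ^ (n - k))
  simp only [hP, hQ] at hp
  rw [← Complex.ofReal_inj]
  push_cast
  push_cast at hp
  linear_combination -hp

theorem fockPurity_convex (n : ℕ) :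
    ConvexOn ℝ Set.univ (fun T : ℝ =>
      ∑ k ∈ Finset.range (n + 1), ((n.choose k : ℝ) * T ^ k * (1 - T) ^ (n - k)) ^ 2) := by
  have hpos : ((n : ℝ) + 1) ≠ 0 := by positivity
  have hfun : (fun T : ℝ =>
      ∑ k ∈ Finset.range (n + 1), ((n.choose k : ℝ) * T ^ k * (1 - T) ^ (n - k)) ^ 2)
      = fun T : ℝ => ∑ j ∈ range (n+1), ((n : ℝ) + 1)⁻¹ *
        (2*(1 - (Complex.exp (2 * Real.pi * Complex.I / ((n : ℂ)+1)) ^ j).re)*T^2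
          - 2*(1 - (Complex.exp (2 * Real.pi * Complex.I / ((n : ℂ)+1)) ^ j).re)*T + 1) ^ n := by
    funext T
    rw [← Finset.mul_sum, ← key n T]
    field_simp
  rw [hfun]
  apply convexOn_finset_sum
  intro j _
  set c : ℝ := 1 - (Complex.exp (2 * Real.pi * Complex.I / ((n : ℂ)+1)) ^ j).re with hc
  have habs : ‖Complex.exp (2 * Real.pi * Complex.I / ((n : ℂ)+1)) ^ j‖ = 1 := by
    have h := Complex.isPrimitiveRoot_exp (n+1) (Nat.succ_ne_zero n)
    have habs1 : ‖Complex.exp (2 * Real.pi * Complex.I / ((n : ℂ)+1))‖ = 1 := by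
      have h2 := h.norm'_eq_one (Nat.succ_ne_zero n)
      convert h2 using 3
      push_cast
      ring
    rw [norm_pow, habs1, one_pow]
  have hre : |(Complex.exp (2 * Real.pi * Complex.I / ((n : ℂ)+1)) ^ j).re| ≤ 1 := by
    calc |(Complex.exp (2 * Real.pi * Complex.I / ((n : ℂ)+1)) ^ j).re|
        ≤ ‖Complex.exp (2 * Real.pi * Complex.I / ((n : ℂ)+1)) ^ j‖ :=
          Complex.abs_re_le_norm _
      _ = 1 := habs
  rw [abs_le] at hre
  have hc0 : 0 ≤ c := by rw [hc]; linarith [hre.2]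
  have hc2 : c ≤ 2 := by rw [hc]; linarith [hre.1]
  have h1 := ((quad_convex c hc0).pow (fun x _ => quad_nonneg c hc0 hc2 x) n).smul
    (c := ((n : ℝ) + 1)⁻¹) (by positivity)
  simpa [smul_eq_mul] using h1
end

section
/- For every natural number n, the purity of a lossy Fock state P_n(T) = Σ_{k=0}^n (C(n,k) T^k (1-T)^{n-k})^2 attains its minimum over T ∈ [0,1] at T = 1/2, with minimum value P_n(1/2) = 2^{-2n} Σ_{k=0}^n C(n,k)^2 = C(2n,n)/4^n. -/
open Polynomial Finset

private lemma coeffA (n : ℕ) (a b : ℝ) :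
    (((X + C a) ^ n * (X + C b) ^ n).coeff n)
      = ∑ k ∈ range (n+1), (n.choose k : ℝ)^2 * a^(n-k) * b^k := by
  rw [coeff_mul, Finset.Nat.sum_antidiagonal_eq_sum_range_succ_mk]
  refine Finset.sum_congr rfl fun k hk => ?_
  rw [coeff_X_add_C_pow, coeff_X_add_C_pow]
  rw [Finset.mem_range] at hk
  have hk' : k ≤ n := Nat.lt_succ_iff.mp hk
  rw [Nat.sub_sub_self hk', Nat.choose_symm hk']
  ring

private lemma coeffB (n : ℕ) (s d : ℝ) :
    ((((X + C s)^2 + C d * X) ^ n).coeff n)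
      = ∑ k ∈ range (n+1), (n.choose k : ℝ) * ((2*k).choose k : ℝ) * d^(n-k) * s^k := by
  rw [add_pow, finset_sum_coeff]
  refine Finset.sum_congr rfl fun k hk => ?_
  rw [Finset.mem_range] at hk
  have hk' : k ≤ n := Nat.lt_succ_iff.mp hk
  have h1 : ((X + C s) ^ 2) ^ k * (C d * X) ^ (n - k) * ((n.choose k : ℕ) : ℝ[X])
      = C ((n.choose k : ℝ) * d ^ (n-k)) * ((X + C s) ^ (2*k) * X ^ (n-k)) := by
    rw [mul_pow, ← pow_mul, C_mul, C_eq_natCast, map_pow]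
    ring
  rw [h1, coeff_C_mul, coeff_mul_X_pow', if_pos (Nat.sub_le n k), Nat.sub_sub_self hk',
    coeff_X_add_C_pow]
  have h2 : 2 * k - k = k := by omega
  rw [h2]
  ring

private lemma polyEq (T : ℝ) :
    (X + C (T^2)) * (X + C ((1-T)^2))
      = (X + C (T*(1-T)))^2 + C ((1-2*T)^2) * X := by
  have h1 : C (T^2) + C ((1-T)^2)
      = C (T*(1-T)) + C (T*(1-T)) + C ((1-2*T)^2) := by
    simp only [← C_add]; congr 1; ring
  have h2 : C (T^2) * C ((1-T)^2) = C (T*(1-T)) * C (T*(1-T)) := by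
    simp only [← C_mul]; congr 1; ring
  linear_combination X * h1 + h2

private lemma cb_step (m : ℕ) : (2*(m+1)).choose (m+1) ≤ 4 * ((2*m).choose m) := by
  have h := Nat.succ_mul_centralBinom_succ m
  have : (m+1) * Nat.centralBinom (m+1) ≤ (m+1) * (4 * Nat.centralBinom m) := by
    rw [h]; nlinarith [Nat.centralBinom_pos m]
  exact Nat.le_of_mul_le_mul_left this (Nat.succ_pos m)

private lemma cb_bound : ∀ j k : ℕ, (2*(k+j)).choose (k+j) ≤ 4^j * ((2*k).choose k) := by
  intro j
  induction j with
  | zero => intro k; simp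
  | succ i ih =>
      intro k
      have h1 : k + (i+1) = (k+i) + 1 := by omega
      rw [h1]
      calc (2*((k+i)+1)).choose ((k+i)+1) ≤ 4 * ((2*(k+i)).choose (k+i)) := cb_step _
        _ ≤ 4 * (4^i * ((2*k).choose k)) := by
              exact Nat.mul_le_mul_left 4 (ih k)
        _ = 4^(i+1) * ((2*k).choose k) := by ring

/-- Purity of the Fock state `|n⟩` after a loss channel of transmission `T`. -/
noncomputable def fockPurity (n : ℕ) (T : ℝ) : ℝ :=
  ∑ k ∈ Finset.range (n + 1), ((n.choose k : ℝ) * T ^ k * (1 - T) ^ (n - k)) ^ 2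

private lemma fockPurity_eq (n : ℕ) (T : ℝ) :
    fockPurity n T = ∑ k ∈ range (n+1),
      (n.choose k : ℝ) * ((2*k).choose k : ℝ) * ((1-2*T)^2)^(n-k) * (T*(1-T))^k := by
  have key : (X + C (T^2)) ^ n * (X + C ((1-T)^2)) ^ n
      = ((X + C (T*(1-T)))^2 + C ((1-2*T)^2) * X) ^ n := by
    rw [← mul_pow, polyEq]
  have h1 := coeffA n (T^2) ((1-T)^2)
  have h2 := coeffB n (T*(1-T)) ((1-2*T)^2)
  rw [key, h2] at h1
  rw [h1]
  unfold fockPurity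
  rw [← Finset.sum_range_reflect]
  refine Finset.sum_congr rfl fun k hk => ?_
  rw [Finset.mem_range] at hk
  have hk' : k ≤ n := Nat.lt_succ_iff.mp hk
  rw [show n + 1 - 1 - k = n - k by omega, Nat.choose_symm hk', Nat.sub_sub_self hk',
    mul_pow, mul_pow, ← pow_mul, ← pow_mul, ← pow_mul, ← pow_mul,
    Nat.mul_comm (n-k) 2, Nat.mul_comm k 2]

private lemma fockPurity_half (n : ℕ) :
    fockPurity n (1/2) = ((2 * n).choose n : ℝ) / 4 ^ n := by
  rw [fockPurity_eq]
  have hd : ((1 : ℝ) - 2*(1/2))^2 = 0 := by norm_num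
  rw [Finset.sum_eq_single n]
  · rw [hd, Nat.sub_self, pow_zero, Nat.choose_self]
    have : ((1:ℝ)/2 * (1 - 1/2)) = 1/4 := by norm_num
    rw [this, div_pow, one_pow, Nat.cast_one]
    ring
  · intro k hk hne
    rw [Finset.mem_range] at hk
    have : n - k ≠ 0 := by omega
    rw [hd, zero_pow this]
    ring
  · intro h; exact absurd (Finset.self_mem_range_succ n) h

theorem fockPurity_min_at_half (n : ℕ) :
    (∀ T ∈ Set.Icc (0 : ℝ) 1, fockPurity n (1 / 2) ≤ fockPurity n T) ∧
    fockPurity n (1 / 2) =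
      2 ^ (-(2 * n : ℤ)) * ∑ k ∈ Finset.range (n + 1), ((n.choose k : ℝ)) ^ 2 ∧
    fockPurity n (1 / 2) = ((2 * n).choose n : ℝ) / 4 ^ n := by
  refine ⟨?_, ?_, fockPurity_half n⟩
  · intro T hT
    obtain ⟨hT0, hT1⟩ := hT
    rw [fockPurity_half, fockPurity_eq]
    set s : ℝ := T*(1-T) with hs
    set d : ℝ := (1-2*T)^2 with hd
    have hs0 : 0 ≤ s := mul_nonneg hT0 (by linarith)
    have hd0 : 0 ≤ d := sq_nonneg _
    have hds : d + 4*s = 1 := by rw [hd, hs]; ring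
    have expand : (1:ℝ) = ∑ k ∈ range (n+1), (4*s)^k * d^(n-k) * (n.choose k : ℝ) := by
      rw [← add_pow]; rw [show (4*s + d : ℝ) = 1 by linarith]; simp
    calc ((2 * n).choose n : ℝ) / 4 ^ n
        = ((2 * n).choose n : ℝ) / 4 ^ n *
            ∑ k ∈ range (n+1), (4*s)^k * d^(n-k) * (n.choose k : ℝ) := by
          rw [← expand]; ring
      _ = ∑ k ∈ range (n+1),
            ((2 * n).choose n : ℝ) / 4 ^ n * ((4*s)^k * d^(n-k) * (n.choose k : ℝ)) := by
          rw [Finset.mul_sum]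
      _ ≤ ∑ k ∈ range (n+1),
            (n.choose k : ℝ) * ((2*k).choose k : ℝ) * d^(n-k) * s^k := by
          refine Finset.sum_le_sum fun k hk => ?_
          rw [Finset.mem_range] at hk
          have hk' : k ≤ n := Nat.lt_succ_iff.mp hk
          have hcb : ((2*n).choose n : ℝ) ≤ 4^(n-k) * ((2*k).choose k : ℝ) := by
            have := cb_bound (n-k) k
            rw [show k + (n-k) = n by omega] at this
            exact_mod_cast this
          have h4 : (4:ℝ)^n = 4^(n-k) * 4^k := by
            rw [← pow_add]; congr 1; omega
          have hnn : (0:ℝ) ≤ s^k * d^(n-k) * (n.choose k : ℝ) := by positivity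
          have lhs_eq : ((2 * n).choose n : ℝ) / 4 ^ n * ((4*s)^k * d^(n-k) * (n.choose k : ℝ))
              = (((2*n).choose n : ℝ) / 4^(n-k)) * (s^k * d^(n-k) * (n.choose k : ℝ)) := by
            rw [mul_pow, h4]
            field_simp
          have rhs_eq : (n.choose k : ℝ) * ((2*k).choose k : ℝ) * d^(n-k) * s^k
              = (((2*k).choose k : ℝ)) * (s^k * d^(n-k) * (n.choose k : ℝ)) := by ring
          rw [lhs_eq, rhs_eq]
          refine mul_le_mul_of_nonneg_right ?_ hnn
          rw [div_le_iff₀ (by positivity)]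
          linarith [hcb]
      _ = _ := rfl
  · unfold fockPurity
    rw [Finset.mul_sum]
    refine Finset.sum_congr rfl fun k hk => ?_
    rw [Finset.mem_range] at hk
    have hk' : k ≤ n := Nat.lt_succ_iff.mp hk
    have h3 : (2:ℝ) ^ (-(2 * n : ℤ)) = ((2:ℝ)⁻¹)^(2*n) := by
      rw [inv_pow, ← zpow_natCast (2:ℝ) (2*n), ← zpow_neg]
      push_cast
      ring_nf
    rw [h3]
    have e1 : ((1:ℝ) - 1/2) = 2⁻¹ := by norm_num
    have e2 : ((1:ℝ)/2) = 2⁻¹ := by norm_num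
    rw [e1, e2, mul_pow, mul_pow, ← pow_mul, ← pow_mul, mul_assoc, ← pow_add,
      show k*2 + (n-k)*2 = 2*n by omega]
    ring
end

section
/- For every natural number n ≥ 0 and for every real T with |T| ≤ 1, P_n(T) = Σ_{k=0}^n (C(n,k) T^k (1-T)^{n-k})^2, viewed as a polynomial in λ = 1-2T, has only even powers of λ with nonnegative coefficients; equivalently, there exist nonnegative reals p_0, ..., p_n such that P_n(T) = Σ_{m=0}^n p_m (1-2T)^{2m}. -/
open Complex intervalIntegral

lemma exp_orth (k j : ℕ) :
    (∫ θ in (0:ℝ)..(2*Real.pi), Complex.exp ((((k:ℂ) - j) * Complex.I) * θ))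
      = if k = j then (2*Real.pi : ℂ) else 0 := by
  by_cases h : k = j
  · simp [h]
  · have hc : ((k:ℂ) - j) * Complex.I ≠ 0 := by
      simp [Complex.ext_iff, sub_eq_zero]
      exact_mod_cast fun hh => h (by exact_mod_cast hh)
    rw [integral_exp_mul_complex hc]
    have : Complex.exp ((((k:ℂ) - j) * Complex.I) * (2*Real.pi)) = 1 := by
      have := Complex.exp_int_mul_two_pi_mul_I ((k:ℤ) - j)
      push_cast at this ⊢
      rw [← this]; ring_nf
    simp [this, h]

lemma factor (x y θ : ℝ) :
    ((x^2 + y^2 + 2*x*y*Real.cos θ : ℝ) : ℂ)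
      = ((x:ℂ) * Complex.exp (Complex.I * θ) + y) * ((x:ℂ) * Complex.exp ((-1) * Complex.I * θ) + y) := by
  have hs := Complex.sin_sq_add_cos_sq (θ:ℂ)
  rw [show Complex.I * (θ:ℂ) = (θ:ℂ) * Complex.I by ring, Complex.exp_mul_I,
    show (-1 : ℂ) * Complex.I * θ = (-(θ:ℂ)) * Complex.I by ring, Complex.exp_mul_I]
  push_cast
  simp only [Complex.cos_neg, Complex.sin_neg]
  linear_combination (-1) * ((x:ℂ))^2 * hs + ((x:ℂ)^2 * Complex.sin (θ:ℂ) ^ 2) * Complex.I_sq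

lemma parseval_s3 (n : ℕ) (x y : ℝ) :
    ∑ k ∈ Finset.range (n+1), ((n.choose k : ℝ) * x^k * y^(n-k))^2
      = (1/(2*Real.pi)) * ∫ θ in (0:ℝ)..(2*Real.pi), (x^2+y^2+2*x*y*Real.cos θ)^n := by
  set a : ℕ → ℂ := fun k => (n.choose k : ℂ) * (x:ℂ)^k * (y:ℂ)^(n-k) with ha
  have step1 : ∀ θ : ℝ, (((x^2+y^2+2*x*y*Real.cos θ)^n : ℝ) : ℂ)
      = ∑ k ∈ Finset.range (n+1), ∑ j ∈ Finset.range (n+1),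
          (a k * a j) * Complex.exp ((((k:ℂ) - j) * Complex.I) * θ) := by
    intro θ
    rw [Complex.ofReal_pow, factor x y θ, mul_pow, add_pow, add_pow, Finset.sum_mul_sum]
    apply Finset.sum_congr rfl
    intro k hk
    apply Finset.sum_congr rfl
    intro j hj
    rw [ha]
    simp only [mul_pow, ← Complex.exp_nat_mul]
    rw [show (((k:ℂ) - j) * Complex.I) * θ = (k:ℂ) * (Complex.I * θ) + (j:ℂ) * ((-1) * Complex.I * θ) by ring, Complex.exp_add]
    ring
  have key : (∫ θ in (0:ℝ)..(2*Real.pi), (((x^2+y^2+2*x*y*Real.cos θ)^n : ℝ) : ℂ))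
      = (2*Real.pi : ℂ) * ∑ k ∈ Finset.range (n+1), (a k)^2 := by
    calc (∫ θ in (0:ℝ)..(2*Real.pi), (((x^2+y^2+2*x*y*Real.cos θ)^n : ℝ) : ℂ))
        = ∫ θ in (0:ℝ)..(2*Real.pi), ∑ k ∈ Finset.range (n+1), ∑ j ∈ Finset.range (n+1),
            (a k * a j) * Complex.exp ((((k:ℂ) - j) * Complex.I) * θ) := by
          simp only [step1]
      _ = ∑ k ∈ Finset.range (n+1), ∑ j ∈ Finset.range (n+1),
            (a k * a j) * ∫ θ in (0:ℝ)..(2*Real.pi), Complex.exp ((((k:ℂ) - j) * Complex.I) * θ) := by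
          rw [intervalIntegral.integral_finset_sum]
          · apply Finset.sum_congr rfl
            intro k _
            rw [intervalIntegral.integral_finset_sum]
            · exact Finset.sum_congr rfl fun j _ => intervalIntegral.integral_const_mul _ _
            · intro j _
              apply Continuous.intervalIntegrable
              fun_prop
          · intro k _
            apply Continuous.intervalIntegrable
            apply continuous_finset_sum
            intro j _
            fun_prop
      _ = (2*Real.pi : ℂ) * ∑ k ∈ Finset.range (n+1), (a k)^2 := by
          simp only [exp_orth]
          rw [Finset.mul_sum]
          apply Finset.sum_congr rfl
          intro k hk
          simp only [mul_ite, mul_zero]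
          rw [Finset.sum_ite_eq (Finset.range (n+1)) k]
          simp only [if_pos hk]
          ring
  have h2 : ((∫ θ in (0:ℝ)..(2*Real.pi), (x^2+y^2+2*x*y*Real.cos θ)^n : ℝ) : ℂ)
      = ((2*Real.pi * ∑ k ∈ Finset.range (n+1), ((n.choose k : ℝ) * x^k * y^(n-k))^2 : ℝ) : ℂ) := by
    rw [← intervalIntegral.integral_ofReal]
    rw [key]
    push_cast [ha]
    ring_nf
    congr 2
    exact Finset.sum_congr rfl fun i _ => by ring
  have h3 := Complex.ofReal_injective h2
  rw [h3]
  have hpi : (2*Real.pi) ≠ 0 := by positivity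
  field_simp

/-- The lossy Fock-state purity is a polynomial in `λ = 1 - 2T` containing only even
powers, with nonnegative coefficients. -/
theorem fockPurity_even_poly (n : ℕ) :
    ∃ p : Fin (n + 1) → ℝ, (∀ m, 0 ≤ p m) ∧
      ∀ T : ℝ, |T| ≤ 1 →
        fockPurity n T = ∑ m : Fin (n + 1), p m * (1 - 2 * T) ^ (2 * (m : ℕ)) := by
  refine ⟨fun m => (n.choose (m:ℕ) : ℝ) *
      ((1/(2*Real.pi)) * ∫ θ in (0:ℝ)..(2*Real.pi),
        ((1 - Real.cos θ)/2)^(m:ℕ) * ((1 + Real.cos θ)/2)^(n-(m:ℕ))), ?_, ?_⟩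
  · intro m
    have hint : 0 ≤ ∫ θ in (0:ℝ)..(2*Real.pi),
        ((1 - Real.cos θ)/2)^(m:ℕ) * ((1 + Real.cos θ)/2)^(n-(m:ℕ)) := by
      apply intervalIntegral.integral_nonneg (by positivity)
      intro u _
      have h1 : (0:ℝ) ≤ (1 - Real.cos u)/2 := by
        have := Real.cos_le_one u; linarith
      have h2 : (0:ℝ) ≤ (1 + Real.cos u)/2 := by
        have := Real.neg_one_le_cos u; linarith
      positivity
    have : (0:ℝ) ≤ 1/(2*Real.pi) := by positivity
    positivity
  · intro T _
    rw [fockPurity, parseval_s3 n T (1-T)]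
    have hintg : ∀ θ : ℝ, (T^2+(1-T)^2+2*T*(1-T)*Real.cos θ)^n
        = ∑ m ∈ Finset.range (n+1), ((1-2*T)^2 * ((1 - Real.cos θ)/2))^m
            * ((1 + Real.cos θ)/2)^(n-m) * (n.choose m : ℝ) := by
      intro θ
      rw [← add_pow]
      congr 1
      ring
    simp only [hintg]
    rw [intervalIntegral.integral_finset_sum (fun m _ => by
      apply Continuous.intervalIntegrable; fun_prop)]
    rw [Finset.mul_sum]
    rw [Fin.sum_univ_eq_sum_range (fun j => (n.choose j : ℝ) *
      ((1/(2*Real.pi)) * ∫ θ in (0:ℝ)..(2*Real.pi),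
        ((1 - Real.cos θ)/2)^j * ((1 + Real.cos θ)/2)^(n-j)) * (1 - 2*T)^(2*j)) (n+1)]
    apply Finset.sum_congr rfl
    intro m hm
    simp only [show ∀ θ:ℝ, ((1-2*T)^2 * ((1 - Real.cos θ)/2))^m * ((1 + Real.cos θ)/2)^(n-m) * (n.choose m : ℝ)
        = ((1-2*T)^(2*m) * (n.choose m : ℝ)) * (((1 - Real.cos θ)/2)^m * ((1 + Real.cos θ)/2)^(n-m))
      from fun θ => by rw [mul_pow, ← pow_mul]; ring]
    rw [intervalIntegral.integral_const_mul]
    ring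
end

section
/- For the lossy Fock state ρ_T = Σ_{k=0}^n C(n,k) T^k (1-T)^{n-k} |k⟩⟨k|, the function T ↦ T · Tr[ρ_T²] = T Σ_k (C(n,k) T^k (1-T)^{n-k})² is monotonically nondecreasing on [0,1]. -/
private lemma fock_sum_sq_identity (a : ℕ → ℝ) (n : ℕ) :
    ∑ k ∈ Finset.range (n+1), ((2*(k:ℝ)+1) * a k ^ 2 - 2*((k:ℝ)+1) * a k * a (k+1))
    = ∑ k ∈ Finset.range n, ((k:ℝ)+1) * (a k - a (k+1))^2
      + ((n:ℝ)+1) * a n ^ 2 - 2*((n:ℝ)+1) * a n * a (n+1) := by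
  induction n with
  | zero => simp
  | succ m ih =>
    rw [Finset.sum_range_succ, ih, Finset.sum_range_succ]
    push_cast
    ring

private lemma fock_hasDerivAt_term (n k : ℕ) (hk : k ≤ n) (T : ℝ) :
    HasDerivAt (fun T : ℝ => T * ((n.choose k : ℝ) * T ^ k * (1 - T) ^ (n - k)) ^ 2)
      ((2*(k:ℝ)+1) * ((n.choose k : ℝ) * T ^ k * (1 - T) ^ (n - k)) ^ 2
        - 2*((k:ℝ)+1) * ((n.choose k : ℝ) * T ^ k * (1 - T) ^ (n - k))
          * ((n.choose (k+1) : ℝ) * T ^ (k+1) * (1 - T) ^ (n - (k+1)))) T := by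
  have hfun : (fun T : ℝ => T * ((n.choose k : ℝ) * T ^ k * (1 - T) ^ (n - k)) ^ 2)
      = fun T : ℝ => (n.choose k : ℝ)^2 * (T ^ (2*k+1) * (1 - T) ^ (2*(n-k))) := by
    funext T; ring
  rw [hfun]
  have h1 : HasDerivAt (fun T : ℝ => T ^ (2*k+1)) ((2*(k:ℝ)+1) * T ^ (2*k)) T := by
    have := hasDerivAt_pow (2*k+1) T
    simpa [Nat.add_sub_cancel] using this.congr_deriv (by push_cast; ring)
  have hsub : HasDerivAt (fun T : ℝ => 1 - T) (-1) T := by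
    simpa using (hasDerivAt_const T (1:ℝ)).fun_sub (hasDerivAt_id T)
  have h2 : HasDerivAt (fun T : ℝ => (1 - T) ^ (2*(n-k)))
      (-((2*((n:ℝ)-(k:ℝ))) * (1 - T) ^ (2*(n-k)-1))) T := by
    have := (hasDerivAt_pow (2*(n-k)) (1-T)).comp T hsub
    refine this.congr_deriv ?_
    push_cast [Nat.cast_sub hk]
    ring
  have h := ((h1.mul h2).const_mul ((n.choose k : ℝ)^2))
  refine h.congr_deriv ?_
  rcases eq_or_lt_of_le hk with rfl | hkn
  · simp only [Nat.sub_self, Nat.choose_self, Nat.choose_succ_self, Nat.cast_one,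
      Nat.cast_zero, pow_zero, sub_self, mul_zero, zero_mul, mul_one, neg_zero, add_zero]
    ring
  · obtain ⟨j, hj⟩ : ∃ j, n - k = j + 1 := ⟨n - k - 1, by omega⟩
    have hj' : n - (k+1) = j := by omega
    have hcast : (n:ℝ) - (k:ℝ) = (j:ℝ) + 1 := by
      have : ((n - k : ℕ) : ℝ) = (j:ℝ) + 1 := by exact_mod_cast congrArg Nat.cast hj
      rw [← this]; push_cast [Nat.cast_sub hk]; ring
    have hch : (n.choose (k+1) : ℝ) * ((k:ℝ)+1) = (n.choose k : ℝ) * ((j:ℝ)+1) := by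
      have h0 := Nat.choose_succ_right_eq n k
      rw [hj] at h0
      exact_mod_cast congrArg Nat.cast h0
    rw [hj, hj', hcast]
    have he : 2*(j+1)-1 = 2*j+1 := by omega
    rw [he]
    linear_combination (2 * (((n.choose k : ℝ)) * T^k * (1-T)^(j+1)) * T^(k+1) * (1-T)^j) * hch

/-- `T ↦ T · Tr[ρ_T²]` is nondecreasing on `[0,1]` for a lossy Fock state `|n⟩`. -/
theorem T_mul_fockPurity_monotone (n : ℕ) :
    MonotoneOn (fun T : ℝ =>
        T * ∑ k ∈ Finset.range (n + 1), ((n.choose k : ℝ) * T ^ k * (1 - T) ^ (n - k)) ^ 2)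
      (Set.Icc (0 : ℝ) 1) := by
  set f : ℝ → ℝ := fun T =>
    T * ∑ k ∈ Finset.range (n + 1), ((n.choose k : ℝ) * T ^ k * (1 - T) ^ (n - k)) ^ 2 with hf
  set g : ℝ → ℝ := fun T => ∑ k ∈ Finset.range (n + 1),
      ((2*(k:ℝ)+1) * ((n.choose k : ℝ) * T ^ k * (1 - T) ^ (n - k)) ^ 2
        - 2*((k:ℝ)+1) * ((n.choose k : ℝ) * T ^ k * (1 - T) ^ (n - k))
          * ((n.choose (k+1) : ℝ) * T ^ (k+1) * (1 - T) ^ (n - (k+1)))) with hg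
  have hderiv : ∀ T : ℝ, HasDerivAt f (g T) T := by
    intro T
    have hfun : f = fun T : ℝ => ∑ k ∈ Finset.range (n + 1),
        T * ((n.choose k : ℝ) * T ^ k * (1 - T) ^ (n - k)) ^ 2 := by
      funext T; simp only [hf, Finset.mul_sum]
    rw [hfun, hg]
    exact HasDerivAt.fun_sum fun k hk =>
      fock_hasDerivAt_term n k (by simpa [Nat.lt_succ_iff] using Finset.mem_range.mp hk) T
  have hmono : Monotone f := by
    apply monotone_of_deriv_nonneg
    · exact fun T => (hderiv T).differentiableAt
    · intro T
      rw [(hderiv T).deriv]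
      simp only [hg]
      have := fock_sum_sq_identity (fun k => (n.choose k : ℝ) * T ^ k * (1 - T) ^ (n - k)) n
      rw [this]
      have hz : (n.choose (n+1) : ℝ) = 0 := by simp
      rw [hz]
      have h1 : (0:ℝ) ≤ ∑ k ∈ Finset.range n, ((k:ℝ)+1) *
          (((n.choose k : ℝ) * T ^ k * (1 - T) ^ (n - k))
            - ((n.choose (k+1) : ℝ) * T ^ (k+1) * (1 - T) ^ (n - (k+1))))^2 :=
        Finset.sum_nonneg fun k _ => mul_nonneg (by positivity) (sq_nonneg _)
      nlinarith [sq_nonneg ((n.choose n : ℝ) * T ^ n * (1 - T) ^ (n - n)), h1]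
  exact hmono.monotoneOn _
end

section
/- The mean photon number of the lossy Fock state, Tr[N ρ_T] = Σ_{k=0}^n k C(n,k) T^k (1-T)^{n-k}, equals nT, and the 'number-weighted purity' Tr[N ρ_T²] = Σ_{k=0}^n k (C(n,k) T^k (1-T)^{n-k})² is nondecreasing in T on [0,1]. -/
open Finset

noncomputable def bb (n k : ℕ) (T : ℝ) : ℝ := (n.choose k : ℝ) * T ^ k * (1 - T) ^ (n - k)

-- binomial theorem: sum of bb = 1
lemma bb_sum (m : ℕ) (T : ℝ) : ∑ k ∈ range (m + 1), bb m k T = 1 := by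
  have h := add_pow T (1 - T) m
  have : (T + (1 - T)) ^ m = 1 := by norm_num
  rw [this] at h
  rw [h]
  exact Finset.sum_congr rfl fun k hk => by simp [bb]; ring

-- identity A
lemma bb_A (n k : ℕ) (T : ℝ) (h : k + 1 ≤ n) :
    ((k + 1 : ℕ) : ℝ) * bb n (k + 1) T = n * T * bb (n - 1) k T := by
  obtain ⟨m, rfl⟩ : ∃ m, n = m + 1 := ⟨n - 1, by omega⟩
  have hc : (m + 1) * m.choose k = (m + 1).choose (k + 1) * (k + 1) :=
    Nat.add_one_mul_choose_eq m k
  have hc' : ((m : ℝ) + 1) * (m.choose k : ℝ) = ((m + 1).choose (k + 1) : ℝ) * ((k : ℝ) + 1) := by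
    exact_mod_cast hc
  simp only [bb, Nat.add_sub_cancel]
  have hsub : m + 1 - (k + 1) = m - k := by omega
  rw [hsub]
  push_cast
  linear_combination (-(T ^ (k + 1) * (1 - T) ^ (m - k))) * hc'

-- identity B (Pascal)
lemma bb_B (n k : ℕ) (T : ℝ) (h : k + 1 ≤ n) :
    bb n (k + 1) T = T * bb (n - 1) k T + (1 - T) * bb (n - 1) (k + 1) T := by
  obtain ⟨m, rfl⟩ : ∃ m, n = m + 1 := ⟨n - 1, by omega⟩
  simp only [bb, Nat.add_sub_cancel]
  have hpascal : (m + 1).choose (k + 1) = m.choose k + m.choose (k + 1) :=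
    Nat.succ_sub_one m ▸ Nat.choose_succ_succ m k
  rcases lt_or_ge k m with hk | hk
  · have h1 : m + 1 - (k + 1) = (m - (k + 1)) + 1 := by omega
    have h2 : m - k = (m - (k + 1)) + 1 := by omega
    rw [hpascal, h1, h2]
    push_cast
    ring
  · have hkm : k = m := by omega
    subst hkm
    simp [Nat.choose_succ_self, Nat.choose_self, pow_succ]
    ring

lemma S_nonneg (n : ℕ) (T : ℝ) (hT : T ≤ 1) :
    0 ≤ ∑ k ∈ range (n + 1), (k : ℝ) * ((k : ℝ) - n * T) * (bb n k T) ^ 2 := by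
  rw [Finset.sum_range_succ']
  simp only [Nat.cast_zero, zero_mul, add_zero]
  have key : ∀ k ∈ range n,
      ((k + 1 : ℕ) : ℝ) * (((k + 1 : ℕ) : ℝ) - n * T) * (bb n (k + 1) T) ^ 2
        = (n * T) ^ 2 * (1 - T) *
          (bb (n-1) k T * (bb (n-1) k T - bb (n-1) (k+1) T)) := by
    intro k hk
    have hkn : k + 1 ≤ n := by simpa using Finset.mem_range.mp hk
    have hA := bb_A n k T hkn
    have hB := bb_B n k T hkn
    push_cast at hA ⊢
    linear_combination (((k:ℝ) + 1) * bb n (k+1) T + (n:ℝ) * T * bb (n-1) k T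
        - (n:ℝ) * T * bb n (k+1) T) * hA + (-((n:ℝ) * T) ^ 2 * bb (n-1) k T) * hB
  rw [Finset.sum_congr rfl key, ← Finset.mul_sum]
  have htele : ∑ k ∈ range n, ((bb (n-1) k T)^2 - (bb (n-1) (k+1) T)^2)
      = (bb (n-1) 0 T)^2 - (bb (n-1) n T)^2 :=
    Finset.sum_range_sub' (fun k => (bb (n-1) k T)^2) n
  have hsumnn : 0 ≤ ∑ k ∈ range n, (bb (n-1) k T * (bb (n-1) k T - bb (n-1) (k+1) T)) := by
    have hrw : ∀ k ∈ range n, bb (n-1) k T * (bb (n-1) k T - bb (n-1) (k+1) T)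
        = (((bb (n-1) k T)^2 - (bb (n-1) (k+1) T)^2) + (bb (n-1) k T - bb (n-1) (k+1) T)^2)/2 := by
      intro k _; ring
    rw [Finset.sum_congr rfl hrw, ← Finset.sum_div, Finset.sum_add_distrib, htele]
    have hend : 0 ≤ (bb (n-1) 0 T)^2 - (bb (n-1) n T)^2 := by
      rcases Nat.eq_zero_or_pos n with rfl | hn
      · simp
      · have h0 : bb (n-1) n T = 0 := by
          simp [bb, Nat.choose_eq_zero_of_lt (show n - 1 < n by omega)]
        rw [h0]
        simpa using sq_nonneg (bb (n-1) 0 T)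
    have hsq : 0 ≤ ∑ k ∈ range n, (bb (n-1) k T - bb (n-1) (k+1) T)^2 :=
      Finset.sum_nonneg fun k _ => sq_nonneg _
    linarith
  have h1 : 0 ≤ ((n:ℝ) * T) ^ 2 * (1 - T) := mul_nonneg (sq_nonneg _) (by linarith)
  exact mul_nonneg h1 hsumnn

lemma mean_id (n : ℕ) (T : ℝ) :
    ∑ k ∈ range (n + 1), (k : ℝ) * bb n k T = n * T := by
  rw [Finset.sum_range_succ']
  simp only [Nat.cast_zero, zero_mul, add_zero]
  have key : ∀ k ∈ range n, ((k + 1 : ℕ) : ℝ) * bb n (k + 1) T = n * T * bb (n-1) k T := by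
    intro k hk
    exact bb_A n k T (by simpa using Finset.mem_range.mp hk)
  rcases Nat.eq_zero_or_pos n with rfl | hn
  · simp
  · have hn1 : n - 1 + 1 = n := by omega
    calc ∑ k ∈ range n, ((k + 1 : ℕ) : ℝ) * bb n (k + 1) T
        = ∑ k ∈ range n, (n : ℝ) * T * bb (n-1) k T := Finset.sum_congr rfl key
      _ = (n : ℝ) * T * ∑ k ∈ range ((n-1) + 1), bb (n-1) k T := by rw [← Finset.mul_sum, hn1]
      _ = n * T := by rw [bb_sum]; ring

noncomputable def dbb (n k : ℕ) (T : ℝ) : ℝ :=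
  (n.choose k : ℝ) * ((k : ℝ) * T ^ (k - 1) * (1 - T) ^ (n - k)
    - ((n - k : ℕ) : ℝ) * T ^ k * (1 - T) ^ (n - k - 1))

lemma bb_hasDeriv (n k : ℕ) (T : ℝ) : HasDerivAt (fun T => bb n k T) (dbb n k T) T := by
  have h1 : HasDerivAt (fun T : ℝ => T ^ k) ((k : ℝ) * T ^ (k - 1)) T := hasDerivAt_pow k T
  have h2 : HasDerivAt (fun T : ℝ => (1 - T) ^ (n - k))
      (((n - k : ℕ) : ℝ) * (1 - T) ^ (n - k - 1) * (-1)) T :=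
    ((hasDerivAt_id T).const_sub 1).pow (n - k)
  have h := ((h1.mul h2).const_mul ((n.choose k : ℝ)))
  convert h using 1
  · rfl
  · rfl
  · funext x; simp [bb]; ring
  · simp only [dbb]; ring

lemma f_hasDeriv (n : ℕ) (T : ℝ) :
    HasDerivAt (fun T : ℝ => ∑ k ∈ range (n + 1), (k : ℝ) * (bb n k T) ^ 2)
      (∑ k ∈ range (n + 1), (k : ℝ) * (2 * bb n k T * dbb n k T)) T := by
  apply HasDerivAt.fun_sum
  intro k _
  have h := (((bb_hasDeriv n k T).pow 2).const_mul ((k : ℝ)))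
  convert h using 1
  · rfl
  · rfl
  norm_num

lemma dbb_key (n k : ℕ) (T : ℝ) (hk : k ≤ n) :
    T * (1 - T) * ((k : ℝ) * dbb n k T) = (k : ℝ) * ((k : ℝ) - n * T) * bb n k T := by
  rcases Nat.eq_zero_or_pos k with rfl | hk0
  · simp [dbb]
  · simp only [dbb, bb]
    have hT : T * T ^ (k - 1) = T ^ k := by
      conv_rhs => rw [show k = (k-1) + 1 by omega]
      rw [pow_succ]; ring
    rcases lt_or_ge k n with hkn | hkn
    · have hS : (1 - T) * (1 - T) ^ (n - k - 1) = (1 - T) ^ (n - k) := by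
        conv_rhs => rw [show n - k = (n - k - 1) + 1 by omega]
        rw [pow_succ]; ring
      have hnk : ((n - k : ℕ) : ℝ) = (n : ℝ) - (k : ℝ) := by
        push_cast [Nat.cast_sub hk]; ring
      rw [hnk]
      linear_combination ((k:ℝ) * (n.choose k : ℝ) * (k:ℝ) * (1 - T) * (1 - T)^(n-k)) * hT
        - ((k:ℝ) * (n.choose k : ℝ) * T * ((n:ℝ) - (k:ℝ)) * T^k) * hS
    · have hkn' : k = n := le_antisymm hk hkn
      subst hkn'
      simp only [Nat.sub_self, Nat.cast_zero, pow_zero, zero_mul, sub_zero, mul_one]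
      linear_combination ((k:ℝ) * (k.choose k : ℝ) * (k:ℝ) * (1 - T)) * hT

lemma deriv_nonneg (n : ℕ) (T : ℝ) (h0 : 0 < T) (h1 : T < 1) :
    0 ≤ ∑ k ∈ range (n + 1), (k : ℝ) * (2 * bb n k T * dbb n k T) := by
  have hpos : 0 < T * (1 - T) := mul_pos h0 (by linarith)
  have hId : T * (1 - T) * ∑ k ∈ range (n + 1), (k : ℝ) * (2 * bb n k T * dbb n k T)
      = 2 * ∑ k ∈ range (n + 1), (k : ℝ) * ((k : ℝ) - n * T) * (bb n k T) ^ 2 := by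
    rw [Finset.mul_sum, Finset.mul_sum]
    apply Finset.sum_congr rfl
    intro k hk
    have hkey := dbb_key n k T (by have := Finset.mem_range.mp hk; omega)
    linear_combination (2 * bb n k T) * hkey
  have hS := S_nonneg n T (le_of_lt h1)
  have : 0 ≤ T * (1 - T) * ∑ k ∈ range (n + 1), (k : ℝ) * (2 * bb n k T * dbb n k T) := by
    rw [hId]; linarith
  exact nonneg_of_mul_nonneg_right (by linarith [this]) hpos

/-- The mean photon number of a lossy Fock state is `nT`, and the number-weighted
purity `Tr[N ρ_T²]` is nondecreasing in `T` on `[0,1]`. -/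
theorem lossy_fock_mean_and_number_purity (n : ℕ) :
    (∀ T : ℝ, ∑ k ∈ Finset.range (n + 1),
        (k : ℝ) * ((n.choose k : ℝ) * T ^ k * (1 - T) ^ (n - k)) = n * T) ∧
    MonotoneOn (fun T : ℝ => ∑ k ∈ Finset.range (n + 1),
        (k : ℝ) * ((n.choose k : ℝ) * T ^ k * (1 - T) ^ (n - k)) ^ 2)
      (Set.Icc (0 : ℝ) 1) := by
  constructor
  · intro T
    exact mean_id n T
  · have hfun : (fun T : ℝ => ∑ k ∈ Finset.range (n + 1),
        (k : ℝ) * ((n.choose k : ℝ) * T ^ k * (1 - T) ^ (n - k)) ^ 2)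
        = fun T : ℝ => ∑ k ∈ range (n + 1), (k : ℝ) * (bb n k T) ^ 2 := rfl
    rw [hfun]
    apply monotoneOn_of_deriv_nonneg (convex_Icc 0 1)
    · exact fun x _ => ((f_hasDeriv n x).continuousAt).continuousWithinAt
    · intro x hx
      exact ((f_hasDeriv n x).differentiableAt).differentiableWithinAt
    · intro x hx
      rw [interior_Icc] at hx
      rw [(f_hasDeriv n x).deriv]
      exact deriv_nonneg n x hx.1 hx.2
end

section
/- Let ψ_0, ..., ψ_d ∈ ℂ with Σ_j |ψ_j|² = 1. Then the quantity P_min = Σ_{n=0}^{2d} 2^{-n} Σ_{k,k'=max(0,n-d)}^{min(n,d)} ψ_k ψ̄_{k'} ψ_{n-k} ψ̄_{n-k'} √(C(n,k) C(n,k')) is a real number satisfying 0 < P_min ≤ 1. -/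
open Complex

/-- The minimum purity (at `T = 1/2`) of a pure state `|ψ⟩ = Σ_j ψ_j |j⟩` with finite
Fock support is a real number in `(0, 1]`. -/
theorem min_purity_pos_le_one (d : ℕ) (ψ : ℕ → ℂ)
    (hsupp : ∀ j, d < j → ψ j = 0)
    (hnorm : ∑ j ∈ Finset.range (d + 1), Complex.normSq (ψ j) = 1) :
    let S : ℂ := ∑ n ∈ Finset.range (2 * d + 1), ((1 / 2 : ℂ) ^ n) *
      ∑ k ∈ Finset.range (n + 1), ∑ k' ∈ Finset.range (n + 1),
        ψ k * (starRingEnd ℂ) (ψ k') * ψ (n - k) * (starRingEnd ℂ) (ψ (n - k')) *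
          (Real.sqrt ((n.choose k : ℝ) * (n.choose k' : ℝ)) : ℂ)
    S.im = 0 ∧ 0 < S.re ∧ S.re ≤ 1 := by
  intro S
  set a : ℕ → ℂ := fun n => ∑ k ∈ Finset.range (n + 1),
    ψ k * ψ (n - k) * (Real.sqrt (n.choose k : ℝ) : ℂ) with ha
  set b : ℕ → ℝ := fun k => Complex.normSq (ψ k) with hb
  have hb0 : ∀ k, 0 ≤ b k := fun k => Complex.normSq_nonneg _
  -- Step 1: S is a cast of a real sum
  have hinner : ∀ n, (∑ k ∈ Finset.range (n + 1), ∑ k' ∈ Finset.range (n + 1),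
      ψ k * (starRingEnd ℂ) (ψ k') * ψ (n - k) * (starRingEnd ℂ) (ψ (n - k')) *
        (Real.sqrt ((n.choose k : ℝ) * (n.choose k' : ℝ)) : ℂ))
      = (Complex.normSq (a n) : ℂ) := by
    intro n
    rw [← Complex.mul_conj, ha]
    simp only [map_sum, Finset.sum_mul_sum, map_mul, Complex.conj_ofReal]
    refine Finset.sum_congr rfl fun k hk => Finset.sum_congr rfl fun k' hk' => ?_
    rw [Real.sqrt_mul (Nat.cast_nonneg _)]
    push_cast
    ring
  set r : ℝ := ∑ n ∈ Finset.range (2 * d + 1), (1 / 2 : ℝ) ^ n * Complex.normSq (a n) with hr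
  have hS : S = (r : ℂ) := by
    simp only [S, hinner, hr]
    push_cast
    ring
  -- maximal nonzero index
  have hex : ∃ j ∈ Finset.range (d + 1), ψ j ≠ 0 := by
    by_contra h
    push_neg at h
    have : ∑ j ∈ Finset.range (d + 1), b j = 0 :=
      Finset.sum_eq_zero fun j hj => by simp [hb, h j hj]
    rw [hnorm] at this
    norm_num at this
  obtain ⟨j, hjd, hjne, hzero⟩ : ∃ j, j ≤ d ∧ ψ j ≠ 0 ∧ ∀ k, j < k → ψ k = 0 := by
    classical
    obtain ⟨j0, hj1, hj2⟩ := hex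
    have hTne : ((Finset.range (d + 1)).filter (fun j => ψ j ≠ 0)).Nonempty :=
      ⟨j0, Finset.mem_filter.2 ⟨hj1, hj2⟩⟩
    obtain ⟨j, hjT, hjmax⟩ := Finset.exists_max_image _ id hTne
    rw [Finset.mem_filter, Finset.mem_range] at hjT
    refine ⟨j, by omega, hjT.2, fun k hk => ?_⟩
    by_cases hkd : d < k
    · exact hsupp k hkd
    · by_contra hne
      have := hjmax k (Finset.mem_filter.2 ⟨Finset.mem_range.2 (by omega), hne⟩)
      simp only [id] at this
      omega
  -- a (2j) ≠ 0
  have haj : a (2 * j) = ψ j * ψ j * (Real.sqrt ((2 * j).choose j : ℝ) : ℂ) := by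
    show (∑ k ∈ Finset.range (2 * j + 1),
        ψ k * ψ (2 * j - k) * (Real.sqrt ((2 * j).choose k : ℝ) : ℂ)) = _
    rw [Finset.sum_eq_single_of_mem j (Finset.mem_range.2 (by omega))]
    · simp [Nat.two_mul, Nat.add_sub_cancel]
    · intro k hk hkj
      rcases lt_or_gt_of_ne hkj with h | h
      · have : j < 2 * j - k := by omega
        rw [hzero _ this]; ring
      · rw [hzero _ h]; ring
  have hajne : a (2 * j) ≠ 0 := by
    rw [haj]
    have hc : (0 : ℝ) < ((2 * j).choose j : ℝ) :=
      Nat.cast_pos.2 (Nat.choose_pos (by omega))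
    have : (Real.sqrt ((2 * j).choose j : ℝ) : ℂ) ≠ 0 := by
      simp only [ne_eq, Complex.ofReal_eq_zero]
      positivity
    exact mul_ne_zero (mul_ne_zero hjne hjne) this
  -- positivity of r
  have hrpos : 0 < r := by
    rw [hr]
    apply Finset.sum_pos' (fun n _ =>
      mul_nonneg (by positivity) (Complex.normSq_nonneg _))
    refine ⟨2 * j, Finset.mem_range.2 (by omega), ?_⟩
    have h5 : 0 < Complex.normSq (a (2 * j)) := Complex.normSq_pos.2 hajne
    positivity
  -- upper bound pieces
  have hbsum : ∀ M : ℕ, ∑ m ∈ Finset.range M, b m ≤ 1 := by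
    intro M
    have h1 : ∑ m ∈ Finset.range M, b m ≤ ∑ m ∈ Finset.range (M + (d + 1)), b m :=
      Finset.sum_le_sum_of_subset_of_nonneg
        (Finset.range_subset_range.2 (by omega)) (fun i _ _ => hb0 i)
    have h2 : ∑ m ∈ Finset.range (M + (d + 1)), b m = ∑ m ∈ Finset.range (d + 1), b m := by
      refine (Finset.sum_subset (Finset.range_subset_range.2 (by omega)) ?_).symm
      intro x hx hx2
      rw [Finset.mem_range] at hx hx2
      simp only [hb, hsupp x (by omega), Complex.normSq_zero]
    rw [h2, hnorm] at h1
    exact h1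
  -- per-n Cauchy-Schwarz bound
  have hcs : ∀ n, Complex.normSq (a n) ≤
      (2 : ℝ) ^ n * ∑ k ∈ Finset.range (n + 1), b k * b (n - k) := by
    intro n
    have h1 : ‖a n‖ ≤ ∑ k ∈ Finset.range (n + 1),
        Real.sqrt (n.choose k : ℝ) * (‖ψ k‖ * ‖ψ (n - k)‖) := by
      refine (norm_sum_le _ _).trans_eq (Finset.sum_congr rfl fun k hk => ?_)
      rw [norm_mul, norm_mul, Complex.norm_real, Real.norm_of_nonneg (Real.sqrt_nonneg _)]
      ring
    have h2 : (∑ k ∈ Finset.range (n + 1),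
        Real.sqrt (n.choose k : ℝ) * (‖ψ k‖ * ‖ψ (n - k)‖)) ^ 2 ≤
        (∑ k ∈ Finset.range (n + 1), Real.sqrt (n.choose k : ℝ) ^ 2) *
        ∑ k ∈ Finset.range (n + 1), (‖ψ k‖ * ‖ψ (n - k)‖) ^ 2 :=
      Finset.sum_mul_sq_le_sq_mul_sq _ _ _
    have h3 : (∑ k ∈ Finset.range (n + 1), Real.sqrt (n.choose k : ℝ) ^ 2) = (2 : ℝ) ^ n := by
      rw [Finset.sum_congr rfl fun k _ => Real.sq_sqrt (Nat.cast_nonneg _)]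
      rw [← Nat.cast_sum, Nat.sum_range_choose]
      push_cast; ring
    have h4 : (∑ k ∈ Finset.range (n + 1), (‖ψ k‖ * ‖ψ (n - k)‖) ^ 2) =
        ∑ k ∈ Finset.range (n + 1), b k * b (n - k) := by
      refine Finset.sum_congr rfl fun k _ => ?_
      rw [mul_pow, hb]
      simp [Complex.normSq_eq_norm_sq]
    calc Complex.normSq (a n) = ‖a n‖ ^ 2 := by
          rw [Complex.normSq_eq_norm_sq]
      _ ≤ (∑ k ∈ Finset.range (n + 1),
            Real.sqrt (n.choose k : ℝ) * (‖ψ k‖ * ‖ψ (n - k)‖)) ^ 2 := by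
          apply pow_le_pow_left₀ (norm_nonneg _) h1
      _ ≤ _ := h2.trans_eq (by rw [h3, h4])
  have hrle : r ≤ 1 := by
    rw [hr]
    calc ∑ n ∈ Finset.range (2 * d + 1), (1 / 2 : ℝ) ^ n * Complex.normSq (a n)
        ≤ ∑ n ∈ Finset.range (2 * d + 1), (1 / 2 : ℝ) ^ n *
            ((2 : ℝ) ^ n * ∑ k ∈ Finset.range (n + 1), b k * b (n - k)) := by
          refine Finset.sum_le_sum fun n _ => ?_
          exact mul_le_mul_of_nonneg_left (hcs n) (by positivity)
      _ = ∑ n ∈ Finset.range (2 * d + 1), ∑ k ∈ Finset.range (n + 1), b k * b (n - k) := by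
          refine Finset.sum_congr rfl fun n _ => ?_
          rw [← mul_assoc, ← mul_pow]
          norm_num
      _ = ∑ k ∈ Finset.range (2 * d + 1), ∑ n ∈ Finset.Ico k (2 * d + 1), b k * b (n - k) := by
          have swap := Finset.sum_Ico_Ico_comm 0 (2 * d + 1) (fun k n => b k * b (n - k))
          simp only [Nat.Ico_zero_eq_range] at swap
          exact swap.symm
      _ ≤ ∑ k ∈ Finset.range (2 * d + 1), b k * 1 := by
          refine Finset.sum_le_sum fun k _ => ?_
          rw [← Finset.mul_sum]
          refine mul_le_mul_of_nonneg_left ?_ (hb0 k)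
          rw [Finset.sum_Ico_eq_sum_range]
          calc ∑ m ∈ Finset.range (2 * d + 1 - k), b (k + m - k)
              = ∑ m ∈ Finset.range (2 * d + 1 - k), b m :=
                Finset.sum_congr rfl fun m _ => by rw [Nat.add_sub_cancel_left]
            _ ≤ 1 := hbsum _
      _ = ∑ k ∈ Finset.range (2 * d + 1), b k := by simp
      _ ≤ 1 := hbsum _
  refine ⟨?_, ?_, ?_⟩ <;> rw [hS] <;> simp [hrpos, hrle]
end
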